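/- Let 1 ≤ i ≤ M, set t_i := θ_i, and let a ∈ ℂˣ. (1) For any nonnegative integers c_1,…,c_N and r′_1,…,r′_{M+1−i}, with μ := Σ_{l=1}^{N} c_l ε_{M+N+1−l} + Σ_{k=1}^{M+1−i} r′_k ε_{M+1−k} ∈ ℤ^I: ∏_{l=1}^{N} ∏_{k=1}^{c_l} q·(1−zaq^{2(k−l)})/(1−zaq^{2(k−l+1)}) · ∏_{k=1}^{M+1−i} ∏_{l=1}^{r′_k} q·(1−zaq^{2(k−l−N)})/(1−zaq^{2(k−l−N+1)}) = ∏_{j=i}^{κ} ((q^{(μ,ε_j)} − zaθ_j q^{−(μ,ε_j)})/(1−zaθ_j))^{(ε_j,ε_j)} in ℂ(z). (2) For any nonnegative integers r_1,…,r_{M+1−i} and c′_1,…,c′_N, with ν := Σ_{k=1}^{M+1−i} r_k ε_{i+k−1} + Σ_{l=1}^{N} c′_l ε_{M+l} ∈ ℤ^I: ∏_{k=1}^{M+1−i} ∏_{l=1}^{r_k} q⁻¹·(1−zat_iq^{2(l−k+1)})/(1−zat_iq^{2(l−k)}) · ∏_{l=1}^{N} ∏_{k=1}^{c′_l} q⁻¹·(1−zat_iq^{2(l−k−M+i)})/(1−zat_iq^{2(l−k−M+i−1)})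 = ∏_{j=i}^{κ} ((q^{−(ν,ε_j)} − zaθ_j q^{(ν,ε_j)})/(1−zaθ_j))^{(ε_j,ε_j)} in ℂ(z). -/

import Mathlib

noncomputable section

namespace QAS

/-- the variable `z` -/
def Z : RatFunc ℂ := RatFunc.X

/-- constant rational functions -/
def Cc (c : ℂ) : RatFunc ℂ := RatFunc.C c

/-- `(ε_j, ε_j) = ±1` (1-based index) -/
def sgn (M : ℕ) (j : ℕ) : ℤ := if j ≤ M then 1 else -1

/-- `θ_j` -/
def theta (M N : ℕ) (q : ℂ) (j : ℕ) : ℂ :=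
  if j ≤ M then q ^ (2 * ((M : ℤ) - N + 1 - j)) else q ^ (2 * ((j : ℤ) - M - N))

/-- `(λ, ε_j)` for `λ ∈ ℤ^I` -/
def epsPairing (M : ℕ) (lam : ℕ → ℤ) (j : ℕ) : ℤ := lam j * sgn M j

/-- `μ = Σ_{l=1}^{N} c_l ε_{M+N+1-l} + Σ_{k=1}^{M+1-i} r′_k ε_{M+1-k}` -/
def muVec (M N i : ℕ) (c r' : ℕ → ℕ) : ℕ → ℤ := fun j =>
  (∑ l ∈ Finset.Icc 1 N, if j = M + N + 1 - l then (c l : ℤ) else 0) +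
    ∑ k ∈ Finset.Icc 1 (M + 1 - i), if j = M + 1 - k then (r' k : ℤ) else 0

/-- `ν = Σ_{k=1}^{M+1-i} r_k ε_{i+k-1} + Σ_{l=1}^{N} c′_l ε_{M+l}` -/
def nuVec (M N i : ℕ) (r c' : ℕ → ℕ) : ℕ → ℤ := fun j =>
  (∑ k ∈ Finset.Icc 1 (M + 1 - i), if j = i + k - 1 then (r k : ℤ) else 0) +
    ∑ l ∈ Finset.Icc 1 N, if j = M + l then (c' l : ℤ) else 0

lemma Cc_sub_ne (u v : ℂ) (hu : u ≠ 0) : Cc u - Cc v * Z ≠ 0 := by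
  have h : Cc u - Cc v * Z =
      algebraMap (Polynomial ℂ) (RatFunc ℂ) (Polynomial.C u - Polynomial.C v * Polynomial.X) := by
    simp [Cc, Z, map_sub, map_mul, RatFunc.algebraMap_C, RatFunc.algebraMap_X]
  rw [h]
  apply RatFunc.algebraMap_ne_zero
  intro hz
  apply hu
  have := congrArg (fun p => Polynomial.coeff p 0) hz
  simpa using this

lemma one_sub_ne (v : ℂ) : (1 : RatFunc ℂ) - Cc v * Z ≠ 0 := by
  have := Cc_sub_ne 1 v one_ne_zero
  simpa [Cc, map_one] using this


open Finset in
lemma tele_up (F : ℤ → RatFunc ℂ) (hF : ∀ m, F m ≠ 0) (w : RatFunc ℂ)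
    (g : ℕ → ℤ) (hg : ∀ m, g (m + 1) = g m + 1) (n : ℕ) :
    ∏ k ∈ Icc 1 n, (w * F (g k) / F (g k + 1)) = w ^ n * (F (g 1) / F (g n + 1)) := by
  induction n with
  | zero => rw [show g 1 = g 0 + 1 from hg 0]; simp [div_self (hF (g 0 + 1))]
  | succ n ih =>
      rw [Finset.prod_Icc_succ_top (by omega), ih, hg n, pow_succ]
      have h1 := hF (g n + 1)
      have h2 := hF (g n + 1 + 1)
      field_simp

open Finset in
lemma tele_down (F : ℤ → RatFunc ℂ) (hF : ∀ m, F m ≠ 0) (w : RatFunc ℂ)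
    (g : ℕ → ℤ) (hg : ∀ m, g (m + 1) = g m - 1) (n : ℕ) :
    ∏ k ∈ Icc 1 n, (w * F (g k) / F (g k + 1)) = w ^ n * (F (g n) / F (g 0)) := by
  induction n with
  | zero => simp [div_self (hF (g 0))]
  | succ n ih =>
      rw [Finset.prod_Icc_succ_top (by omega), ih, hg n,
        show g n - 1 + 1 = g n from by ring, pow_succ]
      have hc : F (g n) / F (g 0) * (F (g n - 1) / F (g n)) = F (g n - 1) / F (g 0) := by
        rw [div_mul_div_comm, mul_comm (F (g n)), mul_div_mul_right _ _ (hF (g n))]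
      linear_combination (w ^ n * w) * hc

open Finset in
lemma tele_up' (F : ℤ → RatFunc ℂ) (hF : ∀ m, F m ≠ 0) (w : RatFunc ℂ)
    (g : ℕ → ℤ) (hg : ∀ m, g (m + 1) = g m + 1) (n : ℕ) :
    ∏ k ∈ Icc 1 n, (w * F (g k + 1) / F (g k)) = w ^ n * (F (g n + 1) / F (g 1)) := by
  induction n with
  | zero => rw [show g 1 = g 0 + 1 from hg 0]; simp [div_self (hF (g 0 + 1))]
  | succ n ih =>
      rw [Finset.prod_Icc_succ_top (by omega), ih, hg n, pow_succ]
      have h1 := hF (g n + 1)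
      have h2 := hF (g 1)
      field_simp

open Finset in
lemma tele_down' (F : ℤ → RatFunc ℂ) (hF : ∀ m, F m ≠ 0) (w : RatFunc ℂ)
    (g : ℕ → ℤ) (hg : ∀ m, g (m + 1) = g m - 1) (n : ℕ) :
    ∏ k ∈ Icc 1 n, (w * F (g k) / F (g k - 1)) = w ^ n * (F (g 1) / F (g n - 1)) := by
  induction n with
  | zero => rw [show g 1 = g 0 - 1 from hg 0]; simp [div_self (hF (g 0 - 1))]
  | succ n ih =>
      rw [Finset.prod_Icc_succ_top (by omega), ih, hg n, pow_succ]
      have hc : F (g 1) / F (g n - 1) * (F (g n - 1) / F (g n - 1 - 1)) =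
          F (g 1) / F (g n - 1 - 1) := by
        rw [div_mul_div_comm, mul_comm (F (g n - 1)) (F (g n - 1 - 1)),
          mul_div_mul_right _ _ (hF (g n - 1))]
      linear_combination (w ^ n * w) * hc

lemma qpow_helper (q : ℂ) (hq : q ≠ 0) (b : ℂ) {x y z : ℤ} (h : x + y = z) :
    q ^ x * (b * q ^ y) = b * q ^ z := by
  rw [← h, zpow_add₀ hq]; ring

lemma Cc_pow (q : ℂ) (r : ℕ) : Cc q ^ r = Cc (q ^ (r : ℤ)) := by
  simp only [Cc, ← map_pow]; norm_cast

lemma Cc_inv_pow (q : ℂ) (hq : q ≠ 0) (r : ℕ) : Cc q⁻¹ ^ r = Cc (q ^ (-(r : ℤ))) := by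
  simp only [Cc, ← map_pow]; congr 1; rw [zpow_neg, zpow_natCast, inv_pow]

lemma fpos (b q : ℂ) (hq : q ≠ 0) (r : ℕ) (s : ℤ) :
    Cc q ^ r * ((1 - Cc (b * q ^ (2 * (s - r))) * Z) / (1 - Cc (b * q ^ (2 * s)) * Z)) =
      (Cc (q ^ (r : ℤ)) - Cc (b * q ^ (2 * s) * q ^ (-(r : ℤ))) * Z) /
        (1 - Cc (b * q ^ (2 * s)) * Z) := by
  rw [← mul_div_assoc]
  congr 1
  have e0 := Cc_pow q r
  have e1 : Cc q ^ r * Cc (b * q ^ (2 * (s - (r:ℤ)))) = Cc (b * q ^ (2 * s) * q ^ (-(r:ℤ))) := by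
    rw [Cc_pow]; simp only [Cc, ← map_mul]
    congr 1
    rw [qpow_helper q hq b (by ring : (r:ℤ) + 2 * (s - (r:ℤ)) = 2*s + -(r:ℤ)), zpow_add₀ hq]
    ring
  linear_combination e0 - Z * e1

lemma fneg (b q : ℂ) (hq : q ≠ 0) (r : ℕ) (s : ℤ) :
    Cc q ^ r * ((1 - Cc (b * q ^ (2 * s)) * Z) / (1 - Cc (b * q ^ (2 * (s + r))) * Z)) =
      ((Cc (q ^ (-(r : ℤ))) - Cc (b * q ^ (2 * s) * q ^ ((r : ℤ))) * Z) /
        (1 - Cc (b * q ^ (2 * s)) * Z))⁻¹ := by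
  rw [inv_div, ← mul_div_assoc,
    div_eq_div_iff (one_sub_ne _) (Cc_sub_ne _ _ (zpow_ne_zero _ hq))]
  have e2 : Cc q ^ r * Cc (q ^ (-(r:ℤ))) = 1 := by
    rw [Cc_pow]; simp only [Cc, ← map_mul, ← zpow_add₀ hq]
    simp
  have e3 : Cc q ^ r * Cc (b * q ^ (2 * s) * q ^ ((r:ℤ))) = Cc (b * q ^ (2 * (s + r))) := by
    rw [Cc_pow]; simp only [Cc, ← map_mul]
    congr 1
    rw [mul_assoc, ← zpow_add₀ hq, qpow_helper q hq b (by ring : (r:ℤ) + (2*s + r) = 2*(s + r))]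
  linear_combination (1 - Cc (b * q ^ (2 * s)) * Z) * e2 - (1 - Cc (b * q ^ (2 * s)) * Z) * Z * e3

lemma fpos2 (b q : ℂ) (hq : q ≠ 0) (r : ℕ) (s : ℤ) :
    Cc q⁻¹ ^ r * ((1 - Cc (b * q ^ (2 * (s + r))) * Z) / (1 - Cc (b * q ^ (2 * s)) * Z)) =
      (Cc (q ^ (-(r : ℤ))) - Cc (b * q ^ (2 * s) * q ^ ((r : ℤ))) * Z) /
        (1 - Cc (b * q ^ (2 * s)) * Z) := by
  rw [← mul_div_assoc]
  congr 1
  have e0 := Cc_inv_pow q hq r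
  have e1 : Cc q⁻¹ ^ r * Cc (b * q ^ (2 * (s + (r:ℤ)))) = Cc (b * q ^ (2 * s) * q ^ ((r:ℤ))) := by
    rw [Cc_inv_pow q hq]; simp only [Cc, ← map_mul]
    congr 1
    rw [qpow_helper q hq b (by ring : -(r:ℤ) + 2 * (s + (r:ℤ)) = 2*s + (r:ℤ)), zpow_add₀ hq]
    ring
  linear_combination e0 - Z * e1

lemma fneg2 (b q : ℂ) (hq : q ≠ 0) (r : ℕ) (s : ℤ) :
    Cc q⁻¹ ^ r * ((1 - Cc (b * q ^ (2 * s)) * Z) / (1 - Cc (b * q ^ (2 * (s - r))) * Z)) =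
      ((Cc (q ^ ((r : ℤ))) - Cc (b * q ^ (2 * s) * q ^ (-(r : ℤ))) * Z) /
        (1 - Cc (b * q ^ (2 * s)) * Z))⁻¹ := by
  rw [inv_div, ← mul_div_assoc,
    div_eq_div_iff (one_sub_ne _) (Cc_sub_ne _ _ (zpow_ne_zero _ hq))]
  have e2 : Cc q⁻¹ ^ r * Cc (q ^ ((r:ℤ))) = 1 := by
    rw [Cc_inv_pow q hq]; simp only [Cc, ← map_mul, ← zpow_add₀ hq]
    simp
  have e3 : Cc q⁻¹ ^ r * Cc (b * q ^ (2 * s) * q ^ (-(r:ℤ))) = Cc (b * q ^ (2 * (s - r))) := by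
    rw [Cc_inv_pow q hq]; simp only [Cc, ← map_mul]
    congr 1
    rw [mul_assoc, ← zpow_add₀ hq,
      qpow_helper q hq b (by ring : -(r:ℤ) + (2*s + -(r:ℤ)) = 2*(s - r))]
  linear_combination (1 - Cc (b * q ^ (2 * s)) * Z) * e2 - (1 - Cc (b * q ^ (2 * s)) * Z) * Z * e3

lemma theta_eval_le (M N : ℕ) (q : ℂ) (j : ℕ) (hj : j ≤ M) :
    theta M N q j = q ^ (2 * ((M : ℤ) - N + 1 - j)) := if_pos hj

lemma theta_eval_gt (M N : ℕ) (q : ℂ) (j : ℕ) (hj : M < j) :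
    theta M N q j = q ^ (2 * ((j : ℤ) - M - N)) := if_neg (by omega)

lemma eps_mu_top (M N i : ℕ) (hi : 1 ≤ i) (hi' : i ≤ M) (c r' : ℕ → ℕ)
    (k : ℕ) (hk1 : 1 ≤ k) (hk2 : k ≤ M + 1 - i) :
    epsPairing M (muVec M N i c r') (M + 1 - k) = (r' k : ℤ) := by
  have h1 : (∑ l ∈ Finset.Icc 1 N, if M + 1 - k = M + N + 1 - l then (c l : ℤ) else 0) = 0 := by
    apply Finset.sum_eq_zero
    intro l hl
    rw [Finset.mem_Icc] at hl
    rw [if_neg (by omega)]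
  have h2 : (∑ k' ∈ Finset.Icc 1 (M + 1 - i), if M + 1 - k = M + 1 - k' then (r' k' : ℤ) else 0)
      = (r' k : ℤ) := by
    rw [Finset.sum_congr rfl (g := fun k' => if k' = k then (r' k' : ℤ) else 0)
      (fun k' hk' => by
        rw [Finset.mem_Icc] at hk'
        by_cases h : k' = k
        · subst h; simp
        · rw [if_neg (by omega)]; simp [h]),
      Finset.sum_ite_eq' (Finset.Icc 1 (M + 1 - i)) k (fun k' => (r' k' : ℤ)),
      if_pos (Finset.mem_Icc.mpr ⟨hk1, hk2⟩)]
  simp only [epsPairing, muVec, sgn, h1, h2, zero_add,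
    if_pos (show M + 1 - k ≤ M by omega), mul_one]

lemma eps_mu_bot (M N i : ℕ) (hi : 1 ≤ i) (hi' : i ≤ M) (c r' : ℕ → ℕ)
    (l : ℕ) (hl1 : 1 ≤ l) (hl2 : l ≤ N) :
    epsPairing M (muVec M N i c r') (M + N + 1 - l) = -(c l : ℤ) := by
  have h2 : (∑ k' ∈ Finset.Icc 1 (M + 1 - i),
      if M + N + 1 - l = M + 1 - k' then (r' k' : ℤ) else 0) = 0 := by
    apply Finset.sum_eq_zero
    intro k' hk'
    rw [Finset.mem_Icc] at hk'
    rw [if_neg (by omega)]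
  have h1 : (∑ l' ∈ Finset.Icc 1 N, if M + N + 1 - l = M + N + 1 - l' then (c l' : ℤ) else 0)
      = (c l : ℤ) := by
    rw [Finset.sum_congr rfl (g := fun l' => if l' = l then (c l' : ℤ) else 0)
      (fun l' hl' => by
        rw [Finset.mem_Icc] at hl'
        by_cases h : l' = l
        · subst h; simp
        · rw [if_neg (by omega)]; simp [h]),
      Finset.sum_ite_eq' (Finset.Icc 1 N) l (fun l' => (c l' : ℤ)),
      if_pos (Finset.mem_Icc.mpr ⟨hl1, hl2⟩)]
  simp only [epsPairing, muVec, sgn, h1, h2, add_zero,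
    if_neg (show ¬ M + N + 1 - l ≤ M by omega)]
  ring

lemma eps_nu_top (M N i : ℕ) (hi : 1 ≤ i) (hi' : i ≤ M) (r c' : ℕ → ℕ)
    (k : ℕ) (hk1 : 1 ≤ k) (hk2 : k ≤ M + 1 - i) :
    epsPairing M (nuVec M N i r c') (i + k - 1) = (r k : ℤ) := by
  have h2 : (∑ l' ∈ Finset.Icc 1 N, if i + k - 1 = M + l' then (c' l' : ℤ) else 0) = 0 := by
    apply Finset.sum_eq_zero
    intro l' hl'
    rw [Finset.mem_Icc] at hl'
    rw [if_neg (by omega)]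
  have h1 : (∑ k' ∈ Finset.Icc 1 (M + 1 - i), if i + k - 1 = i + k' - 1 then (r k' : ℤ) else 0)
      = (r k : ℤ) := by
    rw [Finset.sum_congr rfl (g := fun k' => if k' = k then (r k' : ℤ) else 0)
      (fun k' hk' => by
        rw [Finset.mem_Icc] at hk'
        by_cases h : k' = k
        · subst h; simp
        · rw [if_neg (by omega)]; simp [h]),
      Finset.sum_ite_eq' (Finset.Icc 1 (M + 1 - i)) k (fun k' => (r k' : ℤ)),
      if_pos (Finset.mem_Icc.mpr ⟨hk1, hk2⟩)]
  simp only [epsPairing, nuVec, sgn, h1, h2, add_zero,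
    if_pos (show i + k - 1 ≤ M by omega), mul_one]

lemma eps_nu_bot (M N i : ℕ) (hi : 1 ≤ i) (hi' : i ≤ M) (r c' : ℕ → ℕ)
    (l : ℕ) (hl1 : 1 ≤ l) (hl2 : l ≤ N) :
    epsPairing M (nuVec M N i r c') (M + l) = -(c' l : ℤ) := by
  have h1 : (∑ k' ∈ Finset.Icc 1 (M + 1 - i), if M + l = i + k' - 1 then (r k' : ℤ) else 0)
      = 0 := by
    apply Finset.sum_eq_zero
    intro k' hk'
    rw [Finset.mem_Icc] at hk'
    rw [if_neg (by omega)]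
  have h2 : (∑ l' ∈ Finset.Icc 1 N, if M + l = M + l' then (c' l' : ℤ) else 0) = (c' l : ℤ) := by
    rw [Finset.sum_congr rfl (g := fun l' => if l' = l then (c' l' : ℤ) else 0)
      (fun l' hl' => by
        rw [Finset.mem_Icc] at hl'
        by_cases h : l' = l
        · subst h; simp
        · rw [if_neg (by omega)]; simp [h]),
      Finset.sum_ite_eq' (Finset.Icc 1 N) l (fun l' => (c' l' : ℤ)),
      if_pos (Finset.mem_Icc.mpr ⟨hl1, hl2⟩)]
  simp only [epsPairing, nuVec, sgn, h1, h2, zero_add,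
    if_neg (show ¬ M + l ≤ M by omega)]
  ring

open Finset in
lemma split_prod (f : ℕ → RatFunc ℂ) (i M N : ℕ) (hi : 1 ≤ i) (hi' : i ≤ M) :
    ∏ j ∈ Icc i (M + N), f j = (∏ j ∈ Icc i M, f j) * ∏ j ∈ Icc (M + 1) (M + N), f j := by
  rw [show Icc i (M + N) = Ioc (i - 1) (M + N) from by
        ext x; simp only [mem_Icc, mem_Ioc]; omega,
      show Icc i M = Ioc (i - 1) M from by
        ext x; simp only [mem_Icc, mem_Ioc]; omega,
      show Icc (M + 1) (M + N) = Ioc M (M + N) from by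
        ext x; simp only [mem_Icc, mem_Ioc]; omega,
      Finset.prod_Ioc_consecutive f (by omega) (by omega)]

open Finset in
lemma reindex_top1 (f : ℕ → RatFunc ℂ) (i M : ℕ) (hi : 1 ≤ i) (hi' : i ≤ M) :
    ∏ j ∈ Icc i M, f j = ∏ k ∈ Icc 1 (M + 1 - i), f (M + 1 - k) := by
  refine Finset.prod_bij' (fun j _ => M + 1 - j) (fun k _ => M + 1 - k) ?_ ?_ ?_ ?_ ?_
  · intro x hx; simp only [Finset.mem_Icc] at hx ⊢; omega
  · intro x hx; simp only [Finset.mem_Icc] at hx ⊢; omega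
  · intro x hx; simp only [Finset.mem_Icc] at hx; omega
  · intro x hx; simp only [Finset.mem_Icc] at hx; omega
  · intro x hx; simp only [Finset.mem_Icc] at hx; congr 1; omega

open Finset in
lemma reindex_bot1 (f : ℕ → RatFunc ℂ) (M N : ℕ) :
    ∏ j ∈ Icc (M + 1) (M + N), f j = ∏ l ∈ Icc 1 N, f (M + N + 1 - l) := by
  refine Finset.prod_bij' (fun j _ => M + N + 1 - j) (fun l _ => M + N + 1 - l) ?_ ?_ ?_ ?_ ?_
  · intro x hx; simp only [Finset.mem_Icc] at hx ⊢; omega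
  · intro x hx; simp only [Finset.mem_Icc] at hx ⊢; omega
  · intro x hx; simp only [Finset.mem_Icc] at hx; omega
  · intro x hx; simp only [Finset.mem_Icc] at hx; omega
  · intro x hx; simp only [Finset.mem_Icc] at hx; congr 1; omega

open Finset in
lemma reindex_top2 (f : ℕ → RatFunc ℂ) (i M : ℕ) (hi : 1 ≤ i) (hi' : i ≤ M) :
    ∏ j ∈ Icc i M, f j = ∏ k ∈ Icc 1 (M + 1 - i), f (i + k - 1) := by
  refine Finset.prod_bij' (fun j _ => j - i + 1) (fun k _ => i + k - 1) ?_ ?_ ?_ ?_ ?_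
  · intro x hx; simp only [Finset.mem_Icc] at hx ⊢; omega
  · intro x hx; simp only [Finset.mem_Icc] at hx ⊢; omega
  · intro x hx; simp only [Finset.mem_Icc] at hx; omega
  · intro x hx; simp only [Finset.mem_Icc] at hx; omega
  · intro x hx; simp only [Finset.mem_Icc] at hx; congr 1; omega

open Finset in
lemma reindex_bot2 (f : ℕ → RatFunc ℂ) (M N : ℕ) :
    ∏ j ∈ Icc (M + 1) (M + N), f j = ∏ l ∈ Icc 1 N, f (M + l) := by
  refine Finset.prod_bij' (fun j _ => j - M) (fun l _ => M + l) ?_ ?_ ?_ ?_ ?_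
  · intro x hx; simp only [Finset.mem_Icc] at hx ⊢; omega
  · intro x hx; simp only [Finset.mem_Icc] at hx ⊢; omega
  · intro x hx; simp only [Finset.mem_Icc] at hx; omega
  · intro x hx; simp only [Finset.mem_Icc] at hx; omega
  · intro x hx; simp only [Finset.mem_Icc] at hx; congr 1; omega

/-- the two product identities in `ℂ(z)` used to compute the spectra
of `C_i(z)` for `1 ≤ i ≤ M`, with `t_i = θ_i`. -/
theorem statement12 (M N : ℕ) (hM : 1 ≤ M) (hN : 1 ≤ N) (q : ℂ) (hq : q ≠ 0)
    (hroot : ∀ n : ℕ, 0 < n → q ^ n ≠ 1) (i : ℕ) (hi : 1 ≤ i) (hi' : i ≤ M)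
    (a : ℂ) (ha : a ≠ 0) :
    (∀ c r' : ℕ → ℕ,
      (∏ l ∈ Finset.Icc 1 N, ∏ k ∈ Finset.Icc 1 (c l),
          Cc q * (1 - Cc (a * q ^ (2 * ((k : ℤ) - l))) * Z) /
            (1 - Cc (a * q ^ (2 * ((k : ℤ) - l + 1))) * Z)) *
        (∏ k ∈ Finset.Icc 1 (M + 1 - i), ∏ l ∈ Finset.Icc 1 (r' k),
          Cc q * (1 - Cc (a * q ^ (2 * ((k : ℤ) - l - N))) * Z) /
            (1 - Cc (a * q ^ (2 * ((k : ℤ) - l - N + 1))) * Z)) =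
      ∏ j ∈ Finset.Icc i (M + N),
        ((Cc (q ^ epsPairing M (muVec M N i c r') j) -
            Cc (a * theta M N q j * q ^ (-epsPairing M (muVec M N i c r') j)) * Z) /
          (1 - Cc (a * theta M N q j) * Z)) ^ sgn M j) ∧
    (∀ r c' : ℕ → ℕ,
      (∏ k ∈ Finset.Icc 1 (M + 1 - i), ∏ l ∈ Finset.Icc 1 (r k),
          Cc q⁻¹ * (1 - Cc (a * theta M N q i * q ^ (2 * ((l : ℤ) - k + 1))) * Z) /
            (1 - Cc (a * theta M N q i * q ^ (2 * ((l : ℤ) - k))) * Z)) *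
        (∏ l ∈ Finset.Icc 1 N, ∏ k ∈ Finset.Icc 1 (c' l),
          Cc q⁻¹ * (1 - Cc (a * theta M N q i * q ^ (2 * ((l : ℤ) - k - M + i))) * Z) /
            (1 - Cc (a * theta M N q i * q ^ (2 * ((l : ℤ) - k - M + i - 1))) * Z)) =
      ∏ j ∈ Finset.Icc i (M + N),
        ((Cc (q ^ (-epsPairing M (nuVec M N i r c') j)) -
            Cc (a * theta M N q j * q ^ epsPairing M (nuVec M N i r c') j) * Z) /
          (1 - Cc (a * theta M N q j) * Z)) ^ sgn M j) := by
  constructor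
  · intro c r'
    have L1 : (∏ l ∈ Finset.Icc 1 N, ∏ k ∈ Finset.Icc 1 (c l),
          Cc q * (1 - Cc (a * q ^ (2 * ((k : ℤ) - l))) * Z) /
            (1 - Cc (a * q ^ (2 * ((k : ℤ) - l + 1))) * Z)) =
        ∏ l ∈ Finset.Icc 1 N, Cc q ^ (c l) *
          ((1 - Cc (a * q ^ (2 * ((1 : ℤ) - (l : ℤ)))) * Z) /
            (1 - Cc (a * q ^ (2 * ((c l : ℤ) - (l : ℤ) + 1))) * Z)) := by
      refine Finset.prod_congr rfl fun l hl => ?_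
      exact tele_up (fun m => 1 - Cc (a * q ^ (2 * m)) * Z) (fun m => one_sub_ne _)
        (Cc q) (fun k => (k : ℤ) - l) (fun m => by push_cast; ring) (c l)
    have L2 : (∏ k ∈ Finset.Icc 1 (M + 1 - i), ∏ l ∈ Finset.Icc 1 (r' k),
          Cc q * (1 - Cc (a * q ^ (2 * ((k : ℤ) - l - N))) * Z) /
            (1 - Cc (a * q ^ (2 * ((k : ℤ) - l - N + 1))) * Z)) =
        ∏ k ∈ Finset.Icc 1 (M + 1 - i), Cc q ^ (r' k) *
          ((1 - Cc (a * q ^ (2 * ((k : ℤ) - (r' k : ℤ) - (N : ℤ)))) * Z) /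
            (1 - Cc (a * q ^ (2 * ((k : ℤ) - (0 : ℤ) - (N : ℤ)))) * Z)) := by
      refine Finset.prod_congr rfl fun k hk => ?_
      exact tele_down (fun m => 1 - Cc (a * q ^ (2 * m)) * Z) (fun m => one_sub_ne _)
        (Cc q) (fun l => (k : ℤ) - l - N) (fun m => by push_cast; ring) (r' k)
    rw [L1, L2, split_prod _ i M N hi hi', reindex_top1 _ i M hi hi', reindex_bot1 _ M N,
      mul_comm]
    congr 1
    · refine Finset.prod_congr rfl fun k hk => ?_
      rw [Finset.mem_Icc] at hk
      rw [eps_mu_top M N i hi hi' c r' k hk.1 hk.2,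
        show sgn M (M + 1 - k) = 1 from if_pos (by omega), zpow_one,
        theta_eval_le M N q (M + 1 - k) (by omega),
        show ((M + 1 - k : ℕ) : ℤ) = (M : ℤ) + 1 - k from by omega,
        show 2 * ((M : ℤ) - N + 1 - ((M : ℤ) + 1 - k)) = 2 * ((k : ℤ) - N) from by ring,
        show (k : ℤ) - (r' k : ℤ) - (N : ℤ) = (k : ℤ) - N - (r' k : ℤ) from by ring,
        show (k : ℤ) - (0 : ℤ) - (N : ℤ) = (k : ℤ) - N from by ring]
      exact fpos a q hq (r' k) ((k : ℤ) - N)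
    · refine Finset.prod_congr rfl fun l hl => ?_
      rw [Finset.mem_Icc] at hl
      rw [eps_mu_bot M N i hi hi' c r' l hl.1 hl.2, neg_neg,
        show sgn M (M + N + 1 - l) = -1 from if_neg (by omega),
        theta_eval_gt M N q (M + N + 1 - l) (by omega),
        show ((M + N + 1 - l : ℕ) : ℤ) = (M : ℤ) + N + 1 - l from by omega,
        show 2 * (((M : ℤ) + N + 1 - l) - M - N) = 2 * ((1 : ℤ) - (l : ℤ)) from by ring,
        show (c l : ℤ) - (l : ℤ) + 1 = ((1 : ℤ) - (l : ℤ)) + (c l : ℤ) from by ring,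
        zpow_neg_one]
      exact fneg a q hq (c l) ((1 : ℤ) - (l : ℤ))
  · intro r c'
    have L1 : (∏ k ∈ Finset.Icc 1 (M + 1 - i), ∏ l ∈ Finset.Icc 1 (r k),
          Cc q⁻¹ * (1 - Cc (a * theta M N q i * q ^ (2 * ((l : ℤ) - k + 1))) * Z) /
            (1 - Cc (a * theta M N q i * q ^ (2 * ((l : ℤ) - k))) * Z)) =
        ∏ k ∈ Finset.Icc 1 (M + 1 - i), Cc q⁻¹ ^ (r k) *
          ((1 - Cc (a * theta M N q i * q ^ (2 * ((r k : ℤ) - (k : ℤ) + 1))) * Z) /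
            (1 - Cc (a * theta M N q i * q ^ (2 * ((1 : ℤ) - (k : ℤ)))) * Z)) := by
      refine Finset.prod_congr rfl fun k hk => ?_
      exact tele_up' (fun m => 1 - Cc (a * theta M N q i * q ^ (2 * m)) * Z)
        (fun m => one_sub_ne _) (Cc q⁻¹) (fun l => (l : ℤ) - k)
        (fun m => by push_cast; ring) (r k)
    have L2 : (∏ l ∈ Finset.Icc 1 N, ∏ k ∈ Finset.Icc 1 (c' l),
          Cc q⁻¹ * (1 - Cc (a * theta M N q i * q ^ (2 * ((l : ℤ) - k - M + i))) * Z) /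
            (1 - Cc (a * theta M N q i * q ^ (2 * ((l : ℤ) - k - M + i - 1))) * Z)) =
        ∏ l ∈ Finset.Icc 1 N, Cc q⁻¹ ^ (c' l) *
          ((1 - Cc (a * theta M N q i * q ^ (2 * ((l : ℤ) - 1 - (M : ℤ) + (i : ℤ)))) * Z) /
            (1 - Cc (a * theta M N q i * q ^ (2 * (((l : ℤ) - (c' l : ℤ) - (M : ℤ) + (i : ℤ)) - 1))) * Z)) := by
      refine Finset.prod_congr rfl fun l hl => ?_
      exact tele_down' (fun m => 1 - Cc (a * theta M N q i * q ^ (2 * m)) * Z)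
        (fun m => one_sub_ne _) (Cc q⁻¹) (fun k => (l : ℤ) - k - M + i)
        (fun m => by push_cast; ring) (c' l)
    rw [L1, L2, split_prod _ i M N hi hi', reindex_top2 _ i M hi hi', reindex_bot2 _ M N]
    congr 1
    · refine Finset.prod_congr rfl fun k hk => ?_
      rw [Finset.mem_Icc] at hk
      have ht : a * theta M N q (i + k - 1) = a * theta M N q i * q ^ (2 * ((1 : ℤ) - (k : ℤ))) := by
        rw [theta_eval_le M N q (i + k - 1) (by omega), theta_eval_le M N q i hi',
          mul_assoc, ← zpow_add₀ hq]
        congr 2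
        omega
      rw [eps_nu_top M N i hi hi' r c' k hk.1 hk.2,
        show sgn M (i + k - 1) = 1 from if_pos (by omega), zpow_one, ht,
        show (r k : ℤ) - (k : ℤ) + 1 = ((1 : ℤ) - (k : ℤ)) + (r k : ℤ) from by ring]
      exact fpos2 (a * theta M N q i) q hq (r k) ((1 : ℤ) - (k : ℤ))
    · refine Finset.prod_congr rfl fun l hl => ?_
      rw [Finset.mem_Icc] at hl
      have ht : a * theta M N q (M + l) = a * theta M N q i * q ^ (2 * ((l : ℤ) - 1 - M + i)) := by
        rw [theta_eval_gt M N q (M + l) (by omega), theta_eval_le M N q i hi',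
          mul_assoc, ← zpow_add₀ hq]
        congr 2
        omega
      rw [eps_nu_bot M N i hi hi' r c' l hl.1 hl.2, neg_neg,
        show sgn M (M + l) = -1 from if_neg (by omega), zpow_neg_one, ht,
        show ((l : ℤ) - (c' l : ℤ) - (M : ℤ) + (i : ℤ)) - 1 = ((l : ℤ) - 1 - M + i) - (c' l : ℤ) from by ring]
      exact fneg2 (a * theta M N q i) q hq (c' l) ((l : ℤ) - 1 - M + (i : ℤ))


end QAS
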